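/- Let K be a real number with 0 < K < 1 and let s be the unique positive real root of q_K(z) = z(z+1)² - 4K. Let A be the 4×4 real matrix with rows (a,b,c,d), (b,a,d,c), (c,d,a,b), (d,c,b,a) where a+b+c+d=1 (a Kimura 3-parameter matrix), and set α = 1 - 2(b+c), β = 1 - 2(b+d), γ = 1 - 2(c+d). Then A has all entries strictly positive and det(A) = K if and only if: s < |α| < 1, I_{|α|} < |β| < J_{|α|}, and γ = K/(αβ), where for y = |α|, I_y = max{ (-1 + y + √((1-y)² + 4K/y))/2, (1 + y - √((1+y)² - 4K/y))/2 } and J_y = min{ (1 + y + √((1+y)² - 4K/y))/2, (1 - y + √((1-y)² + 4K/y))/2 }. -/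

import Mathlib

/-! The K81 matrix is diagonalised by the characters of the Klein four-group: its eigenvalues are
`1, α, β, γ`, so `det A = α β γ`, and its entries are `(1 ± α ± β ± γ) / 4` with an even number of
minus signs. Since `α β γ = K > 0`, the signs of `(α, β, γ)` merely permute these four forms, so
positivity only depends on `x = |α|`, `y = |β|` and `z = |γ| = K / (x y)`: it says `y + z < 1 + x`
and `|y - z| < 1 - x`. Multiplied by `y`, these become quadratic inequalities in `y` whose roots
are the bounds `I_x`, `J_x`; the first one has real roots iff `x (x + 1)² > 4K`, i.e. iff `x > s`. -/

theorem det_kimura3 (a b c d : ℝ) :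
    (!![a, b, c, d; b, a, d, c; c, d, a, b; d, c, b, a]).det =
      (a + b + c + d) * (a + b - c - d) * (a - b + c - d) * (a - b - c + d) := by
  simp [Matrix.det_succ_row_zero, Fin.sum_univ_succ, Fin.succAbove]
  ring

theorem kimura3_pos_iff (a b c d : ℝ) :
    (∀ i j, 0 < (!![a, b, c, d; b, a, d, c; c, d, a, b; d, c, b, a]) i j) ↔
      0 < a ∧ 0 < b ∧ 0 < c ∧ 0 < d := by
  refine ⟨fun h => ⟨h 0 0, h 0 1, h 0 2, h 0 3⟩, ?_⟩
  rintro ⟨ha, hb, hc, hd⟩ i j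
  fin_cases i <;> fin_cases j <;> assumption

theorem strictMonoOn_mul_add_one_sq : StrictMonoOn (fun t : ℝ => t * (t + 1) ^ 2) (Set.Ici 0) := by
  intro x (hx : 0 ≤ x) y _ hxy
  dsimp only
  gcongr

theorem quadratic_neg_iff_abs_lt {B C D : ℝ} (hD : D = B ^ 2 - 4 * C) (y : ℝ) :
    y ^ 2 - B * y + C < 0 ↔ |2 * y - B| < √D := by
  rw [Real.lt_sqrt (abs_nonneg _), sq_abs, hD]
  constructor <;> intro h <;> linarith

theorem quadratic_pos_iff_sqrt_lt_abs {B C D : ℝ} (hD : D = B ^ 2 - 4 * C) (hD0 : 0 ≤ D) (y : ℝ) :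
    0 < y ^ 2 - B * y + C ↔ √D < |2 * y - B| := by
  rw [← Real.sqrt_sq_eq_abs, Real.sqrt_lt_sqrt_iff hD0, hD]
  constructor <;> intro h <;> linarith

theorem abs_lt_sqrt_sq_add {B P : ℝ} (hP : 0 < P) : |B| < √(B ^ 2 + P) := by
  rw [Real.lt_sqrt (abs_nonneg _), sq_abs]
  linarith

section
variable {y z p : ℝ}

theorem add_lt_iff_abs_lt_sqrt (hy : 0 < y) (hyz : y * z = p) (B : ℝ) :
    y + z < B ↔ |2 * y - B| < √(B ^ 2 - 4 * p) := by
  rw [← quadratic_neg_iff_abs_lt rfl, ← sub_pos, ← mul_pos_iff_of_pos_left hy]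
  constructor <;> intro h <;> linarith

theorem sub_lt_iff_abs_lt_sqrt (hy : 0 < y) (hyz : y * z = p) (B : ℝ) :
    y - z < B ↔ |2 * y - B| < √(B ^ 2 + 4 * p) := by
  rw [← quadratic_neg_iff_abs_lt (C := -p) (by ring), ← sub_pos, ← mul_pos_iff_of_pos_left hy]
  constructor <;> intro h <;> linarith

theorem sub_lt_iff_sqrt_lt_abs (hy : 0 < y) (hyz : y * z = p) {B : ℝ}
    (hD : 0 ≤ B ^ 2 + 4 * p) :
    z - y < B ↔ √(B ^ 2 + 4 * p) < |2 * y + B| := by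
  rw [← sub_neg_eq_add (2 * y), ← quadratic_pos_iff_sqrt_lt_abs (B := -B) (C := -p) (by ring) hD,
    ← sub_pos, ← mul_pos_iff_of_pos_left hy]
  constructor <;> intro h <;> linarith
end

theorem lt_conditions_iff_interval_bounds {K s x y z : ℝ} (hK : 0 < K) (hs : 0 ≤ s)
    (hsK : s * (s + 1) ^ 2 = 4 * K) (hx : 0 < x) (hy : 0 < y) (hyz : y * z = K / x) :
    (y + z < 1 + x ∧ y - z < 1 - x ∧ z - y < 1 - x) ↔
      (s < x ∧ x < 1 ∧
        max ((-1 + x + √((1 - x) ^ 2 + 4 * K / x)) / 2)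
            ((1 + x - √((1 + x) ^ 2 - 4 * K / x)) / 2) < y ∧
        y < min ((1 + x + √((1 + x) ^ 2 - 4 * K / x)) / 2)
            ((1 - x + √((1 - x) ^ 2 + 4 * K / x)) / 2)) := by
  have hroot : 0 < (1 + x) ^ 2 - 4 * K / x ↔ s < x := by
    rw [sub_pos, div_lt_iff₀ hx, ← hsK, ← strictMonoOn_mul_add_one_sq.lt_iff_lt hs hx.le]
    ring_nf
  have hr : |1 - x| < √((1 - x) ^ 2 + 4 * K / x) := abs_lt_sqrt_sq_add (by positivity)
  rw [abs_lt] at hr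
  simp only [mul_div_assoc] at hroot hr ⊢
  rw [add_lt_iff_abs_lt_sqrt hy hyz, sub_lt_iff_abs_lt_sqrt hy hyz,
    sub_lt_iff_sqrt_lt_abs hy hyz (by positivity), abs_lt, abs_lt, lt_abs, max_lt_iff, lt_min_iff]
  constructor
  · rintro ⟨⟨h1, h2⟩, ⟨h3, h4⟩, h5 | h5⟩
    · exact ⟨hroot.mp (Real.sqrt_pos.mp (by linarith)), by linarith, ⟨by linarith, by linarith⟩,
        by linarith, by linarith⟩
    · linarith
  · rintro ⟨-, -, ⟨h1, h2⟩, h3, h4⟩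
    exact ⟨⟨by linarith, by linarith⟩, ⟨by linarith, by linarith⟩, Or.inl (by linarith)⟩

theorem four_pos_iff_abs_of_mul_pos {α β γ : ℝ} (h : 0 < α * β * γ) :
    (0 < 1 + α + β + γ ∧ 0 < 1 - α - β + γ ∧ 0 < 1 - α + β - γ ∧ 0 < 1 + α - β - γ) ↔
      (|β| + |γ| < 1 + |α| ∧ |β| - |γ| < 1 - |α| ∧ |γ| - |β| < 1 - |α|) := by
  obtain ⟨⟨hα, hβ⟩ | ⟨hα, hβ⟩, hγ⟩ | ⟨⟨hα, hβ⟩ | ⟨hα, hβ⟩, hγ⟩ :=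
    (pos_and_pos_or_neg_and_neg_of_mul_pos h).imp
      (And.imp_left pos_and_pos_or_neg_and_neg_of_mul_pos) (And.imp_left mul_neg_iff.mp)
  all_goals
    simp only [abs_of_pos, abs_of_neg, *]
    refine ⟨fun ⟨_, _, _, _⟩ => ⟨?_, ?_, ?_⟩, fun ⟨_, _, _⟩ => ⟨?_, ?_, ?_, ?_⟩⟩ <;> linarith

theorem kimura3_params_iff {K s α β γ : ℝ} (hK : 0 < K) (hs : 0 < s)
    (hsK : s * (s + 1) ^ 2 = 4 * K) :
    ((0 < 1 + α + β + γ ∧ 0 < 1 - α - β + γ ∧ 0 < 1 - α + β - γ ∧ 0 < 1 + α - β - γ) ∧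
        α * β * γ = K) ↔
      (s < |α| ∧ |α| < 1 ∧
        max ((-1 + |α| + √((1 - |α|) ^ 2 + 4 * K / |α|)) / 2)
            ((1 + |α| - √((1 + |α|) ^ 2 - 4 * K / |α|)) / 2) < |β| ∧
        |β| < min ((1 + |α| + √((1 + |α|) ^ 2 - 4 * K / |α|)) / 2)
            ((1 - |α| + √((1 - |α|) ^ 2 + 4 * K / |α|)) / 2) ∧
        γ = K / (α * β)) := by
  have habs (hprod : α * β * γ = K) (hα : α ≠ 0) : |β| * |γ| = K / |α| := by
    rw [eq_div_iff (abs_ne_zero.mpr hα), ← abs_of_pos hK, ← hprod, abs_mul, abs_mul]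
    ring
  constructor
  · rintro ⟨hP, hprod⟩
    have hpos : 0 < α * β * γ := hprod ▸ hK
    have hαβ : α * β ≠ 0 := left_ne_zero_of_mul hpos.ne'
    have hα : α ≠ 0 := left_ne_zero_of_mul hαβ
    obtain ⟨hsx, hx1, hlow, hup⟩ := (lt_conditions_iff_interval_bounds hK hs.le hsK (abs_pos.mpr hα)
      (abs_pos.mpr (right_ne_zero_of_mul hαβ)) (habs hprod hα)).mp
      ((four_pos_iff_abs_of_mul_pos hpos).mp hP)
    exact ⟨hsx, hx1, hlow, hup, by rw [eq_div_iff hαβ, ← hprod]; ring⟩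
  · rintro ⟨hsx, hx1, hlow, hup, hγ⟩
    have hx : 0 < |α| := hs.trans hsx
    have hy : 0 < |β| := by
      have := abs_lt_sqrt_sq_add (B := 1 - |α|) (P := 4 * K / |α|) (by positivity)
      linarith [le_abs_self (1 - |α|), le_max_left _ _ |>.trans_lt hlow]
    have hα : α ≠ 0 := abs_pos.mp hx
    have hprod : α * β * γ = K := by
      rw [hγ]
      field_simp [abs_pos.mp hy]
    refine ⟨(four_pos_iff_abs_of_mul_pos (hprod ▸ hK)).mpr ?_, hprod⟩
    exact (lt_conditions_iff_interval_bounds hK hs.le hsK hx hy (habs hprod hα)).mpr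
      ⟨hsx, hx1, hlow, hup⟩

theorem stmt_10_general (K : ℝ) (hK0 : 0 < K) (s : ℝ)
    (hs : 0 < s ∧ s * (s + 1) ^ 2 - 4 * K = 0)
    (a b c d : ℝ) (hsum : a + b + c + d = 1)
    (A : Matrix (Fin 4) (Fin 4) ℝ)
    (hA : A = !![a, b, c, d; b, a, d, c; c, d, a, b; d, c, b, a])
    (α β γ : ℝ) (hα : α = 1 - 2 * (b + c)) (hβ : β = 1 - 2 * (b + d))
    (hγ : γ = 1 - 2 * (c + d)) :
    ((∀ i j, 0 < A i j) ∧ A.det = K) ↔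
      (s < |α| ∧ |α| < 1 ∧
        max ((-1 + |α| + Real.sqrt ((1 - |α|) ^ 2 + 4 * K / |α|)) / 2)
            ((1 + |α| - Real.sqrt ((1 + |α|) ^ 2 - 4 * K / |α|)) / 2) < |β| ∧
        |β| < min ((1 + |α| + Real.sqrt ((1 + |α|) ^ 2 - 4 * K / |α|)) / 2)
            ((1 - |α| + Real.sqrt ((1 - |α|) ^ 2 + 4 * K / |α|)) / 2) ∧
        γ = K / (α * β)) := by
  obtain ⟨hs0, hsK⟩ := hs
  obtain rfl : a = 1 - b - c - d := by linarith
  have hdet : A.det = α * β * γ := by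
    rw [hA, det_kimura3, hα, hβ, hγ]
    ring
  rw [hdet, hA, kimura3_pos_iff, ← kimura3_params_iff hK0 hs0 (by linarith), hα, hβ, hγ]
  refine and_congr_left' ⟨fun ⟨_, _, _, _⟩ => ⟨?_, ?_, ?_, ?_⟩, fun ⟨_, _, _, _⟩ => ⟨?_, ?_, ?_, ?_⟩⟩
  all_goals linarith

theorem stmt_10 (K : ℝ) (hK0 : 0 < K) (hK1 : K < 1) (s : ℝ)
    (hs : 0 < s ∧ s * (s + 1) ^ 2 - 4 * K = 0)
    (hsu : ∀ t : ℝ, 0 < t → t * (t + 1) ^ 2 - 4 * K = 0 → t = s)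
    (a b c d : ℝ) (hsum : a + b + c + d = 1)
    (A : Matrix (Fin 4) (Fin 4) ℝ)
    (hA : A = !![a, b, c, d; b, a, d, c; c, d, a, b; d, c, b, a])
    (α β γ : ℝ) (hα : α = 1 - 2 * (b + c)) (hβ : β = 1 - 2 * (b + d))
    (hγ : γ = 1 - 2 * (c + d)) :
    ((∀ i j, 0 < A i j) ∧ A.det = K) ↔
      (s < |α| ∧ |α| < 1 ∧
        max ((-1 + |α| + Real.sqrt ((1 - |α|) ^ 2 + 4 * K / |α|)) / 2)
            ((1 + |α| - Real.sqrt ((1 + |α|) ^ 2 - 4 * K / |α|)) / 2) < |β| ∧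
        |β| < min ((1 + |α| + Real.sqrt ((1 + |α|) ^ 2 - 4 * K / |α|)) / 2)
            ((1 - |α| + Real.sqrt ((1 - |α|) ^ 2 + 4 * K / |α|)) / 2) ∧
        γ = K / (α * β)) :=
  stmt_10_general K hK0 s hs a b c d hsum A hA α β γ hα hβ hγ
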